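/- Every self-similar measure on R^d whose attractor is not a single point has positive lower Assouad dimension, and hence is uniformly perfect. -/

import Mathlib

open MeasureTheory Metric Set
open scoped ENNReal

def msupp {X : Type*} [MetricSpace X] [MeasurableSpace X] (μ : Measure X) : Set X :=
  {x | ∀ r > 0, 0 < μ (ball x r)}

def lowerASet {X : Type*} [MetricSpace X] [MeasurableSpace X] (μ : Measure X) : Set ℝ :=
  {s | 0 ≤ s ∧ ∃ c₁ > (0:ℝ), ∃ c₂ > (0:ℝ), ∀ x ∈ msupp μ, ∀ r R : ℝ,
    0 < r → r ≤ R → R ≤ c₁ →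
    c₂ * (R / r) ^ s * (μ (ball x r)).toReal ≤ (μ (ball x R)).toReal}

noncomputable def dimL {X : Type*} [MetricSpace X] [MeasurableSpace X] (μ : Measure X) : ℝ :=
  sSup (lowerASet μ)

/-!
The support `K` of `μ` is compact, and two of its points at distance `8δ > 0` show that no ball
of radius `δ` carries more than `1 - η` of the mass. Cutting the coding tree at the words `w`
with `wordProd ρ w ≈ t` writes `μ` as a finite combination of the copies `μ ∘ S_w⁻¹`, which are
`μ` shrunk by a factor about `t`. This carries the gap at scale `δ` to every scale:
`μ (B(x, cR)) ≤ (1 - γ) μ (B(x, R))` for `x ∈ K` and `R ≤ diam K`. That is uniform perfectness,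
and iterating it puts `log (1 - γ) / log c > 0` into the lower Assouad set. As `dimL μ` is a
supremum (and `sSup` of an unbounded set of reals is `0`), that set must also be bounded above;
this follows from `μ (B(S_i^n z, ρ_i^n)) ≥ p_i^n μ (B(z, 1))`.
-/

open Filter Topology

theorem Finset.exists_pos_forall_le {α : Type*} (s : Finset α) {f : α → ℝ} (hf : ∀ a, 0 < f a) :
    ∃ m > 0, ∀ a ∈ s, m ≤ f a := by
  rcases s.eq_empty_or_nonempty with rfl | hs
  · exact ⟨1, one_pos, by simp⟩
  · obtain ⟨a₀, -, ha₀⟩ := s.exists_min_image f hs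
    exact ⟨f a₀, hf a₀, ha₀⟩

theorem ENNReal.le_ofReal_one_sub_mul {x y : ℝ≥0∞} {γ : ℝ} (hγ : 0 ≤ γ) (hy : y ≤ 1)
    (h : x + ENNReal.ofReal γ ≤ y) : x ≤ ENNReal.ofReal (1 - γ) * y := by
  have hy' : y ≠ ⊤ := ne_top_of_le_ne_top ENNReal.one_ne_top hy
  rw [ENNReal.ofReal_sub _ hγ, ENNReal.ofReal_one, ENNReal.sub_mul fun _ _ => hy', one_mul]
  refine ENNReal.le_sub_of_add_le_right (ENNReal.mul_ne_top ENNReal.ofReal_ne_top hy') ?_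
  exact (add_le_add_right (mul_le_of_le_one_right' hy) x).trans h

theorem ofReal_mul_le_measure_diff {α : Type*} [MeasurableSpace α] {μ : Measure α}
    [IsFiniteMeasure μ] {A B : Set α} (hBA : B ⊆ A) (hB : MeasurableSet B) {γ : ℝ}
    (hγ0 : 0 ≤ γ) (hγ1 : γ ≤ 1) (h : μ B ≤ ENNReal.ofReal (1 - γ) * μ A) :
    ENNReal.ofReal γ * μ A ≤ μ (A \ B) := by
  rw [measure_sdiff hBA hB.nullMeasurableSet (measure_ne_top μ B)]
  refine ENNReal.le_sub_of_add_le_right (measure_ne_top μ B) ?_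
  calc ENNReal.ofReal γ * μ A + μ B ≤ ENNReal.ofReal γ * μ A + ENNReal.ofReal (1 - γ) * μ A := by
        gcongr
    _ = μ A := by rw [← add_mul, ← ENNReal.ofReal_add hγ0 (by linarith)]; simp

section Support

variable {X : Type*} [MetricSpace X] [MeasurableSpace X] {μ : Measure X}

theorem msupp_eq_support (μ : Measure X) : msupp μ = μ.support := by
  ext x
  exact nhds_basis_ball.mem_measureSupport.symm

variable [HereditarilyLindelofSpace X]

theorem measure_compl_msupp (μ : Measure X) : μ (msupp μ)ᶜ = 0 := by
  rw [msupp_eq_support]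
  exact Measure.measure_compl_support

theorem measure_compl_closedBall_diam_msupp (hK : Bornology.IsBounded (msupp μ)) {y : X}
    (hy : y ∈ msupp μ) : μ (closedBall y (diam (msupp μ)))ᶜ = 0 :=
  measure_mono_null (compl_subset_compl.2 fun _ hz =>
    mem_closedBall.2 (dist_le_diam_of_mem hK hz hy)) (measure_compl_msupp μ)

theorem msupp_subset_biUnion_image [OpensMeasurableSpace X] {α : Type*} {Λ : Finset α}
    {f : α → X → X} {c : α → ℝ≥0∞} (hK : IsCompact (msupp μ)) (hf : ∀ a ∈ Λ, Continuous (f a))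
    (hμ : ∀ A, MeasurableSet A → μ A = ∑ a ∈ Λ, c a * μ (f a ⁻¹' A)) :
    msupp μ ⊆ ⋃ a ∈ Λ, f a '' msupp μ := by
  intro x hx
  by_contra hxC
  have hC : IsClosed (⋃ a ∈ Λ, f a '' msupp μ) :=
    Λ.finite_toSet.isClosed_biUnion fun a ha => (hK.image (hf a ha)).isClosed
  obtain ⟨r, hr, hball⟩ := Metric.isOpen_iff.1 hC.isOpen_compl x hxC
  have hnull : μ (ball x r) = 0 := by
    rw [hμ _ measurableSet_ball]
    refine Finset.sum_eq_zero fun a ha => ?_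
    have hsub : f a ⁻¹' ball x r ⊆ (msupp μ)ᶜ := fun z hz hzK =>
      hball hz (mem_biUnion ha (mem_image_of_mem _ hzK))
    rw [measure_mono_null hsub (measure_compl_msupp μ), mul_zero]
  exact (hx r hr).ne' hnull

end Support

section LowerAssouad

variable {X : Type*} [MetricSpace X] [MeasurableSpace X] {μ : Measure X} [IsFiniteMeasure μ]

theorem exists_ofReal_le_measure_compl_ball {a b : X} (ha : a ∈ msupp μ) (hb : b ∈ msupp μ)
    {δ : ℝ} (hδ : 0 < δ) (hab : 4 * δ < dist a b) :
    ∃ η > 0, ∀ z, ENNReal.ofReal η ≤ μ (ball z δ)ᶜ := by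
  refine ⟨min (μ.real (ball a δ)) (μ.real (ball b δ)),
    lt_min (ENNReal.toReal_pos (ha δ hδ).ne' (measure_ne_top _ _))
      (ENNReal.toReal_pos (hb δ hδ).ne' (measure_ne_top _ _)), fun z => ?_⟩
  have hfar : ∀ e, 2 * δ ≤ dist z e → μ (ball e δ) ≤ μ (ball z δ)ᶜ := fun e he =>
    measure_mono fun y hy hy' => by
      rw [mem_ball'] at hy hy'
      linarith [dist_triangle_right z e y]
  rcases le_or_gt (2 * δ) (dist z a) with hza | hza
  · exact (ENNReal.ofReal_le_ofReal (min_le_left _ _)).trans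
      ((ofReal_measureReal (measure_ne_top _ _)).trans_le (hfar a hza))
  · have hzb : 2 * δ ≤ dist z b := by linarith [dist_triangle_left a b z]
    exact (ENNReal.ofReal_le_ofReal (min_le_right _ _)).trans
      ((ofReal_measureReal (measure_ne_top _ _)).trans_le (hfar b hzb))

theorem measureReal_ball_pow_mul_le {c γ D : ℝ} (hc0 : 0 < c) (hc1 : c < 1) (hγ1 : γ < 1)
    (h : ∀ x ∈ msupp μ, ∀ R, 0 < R → R ≤ D →
      μ (ball x (c * R)) ≤ ENNReal.ofReal (1 - γ) * μ (ball x R))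
    {x : X} (hx : x ∈ msupp μ) {R : ℝ} (hR : 0 < R) (hRD : R ≤ D) (k : ℕ) :
    μ.real (ball x (c ^ k * R)) ≤ (1 - γ) ^ k * μ.real (ball x R) := by
  induction k with
  | zero => simp
  | succ k ih =>
    have hkD : c ^ k * R ≤ D :=
      (mul_le_of_le_one_left hR.le (pow_le_one₀ hc0.le hc1.le)).trans hRD
    have hstep := ENNReal.toReal_mono (by finiteness) (h x hx _ (by positivity) hkD)
    rw [ENNReal.toReal_mul, ENNReal.toReal_ofReal (by linarith)] at hstep
    calc μ.real (ball x (c ^ (k + 1) * R)) = μ.real (ball x (c * (c ^ k * R))) := by ring_nf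
      _ ≤ (1 - γ) * μ.real (ball x (c ^ k * R)) := hstep
      _ ≤ (1 - γ) * ((1 - γ) ^ k * μ.real (ball x R)) := by gcongr
      _ = (1 - γ) ^ (k + 1) * μ.real (ball x R) := by ring

theorem mem_lowerASet_of_measure_ball_le {c γ D : ℝ} (hc0 : 0 < c) (hc1 : c < 1) (hγ0 : 0 < γ)
    (hγ1 : γ < 1) (hD : 0 < D)
    (h : ∀ x ∈ msupp μ, ∀ R, 0 < R → R ≤ D →
      μ (ball x (c * R)) ≤ ENNReal.ofReal (1 - γ) * μ (ball x R)) :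
    Real.log (1 - γ) / Real.log c ∈ lowerASet μ := by
  set s := Real.log (1 - γ) / Real.log c
  have hlogc := Real.log_neg hc0 hc1
  have hs0 : 0 < s := div_pos_of_neg_of_neg (Real.log_neg (by linarith) (by linarith)) hlogc
  have hcs : c ^ s = 1 - γ := by
    rw [Real.rpow_def_of_pos hc0, mul_div_cancel₀ _ hlogc.ne, Real.exp_log (by linarith)]
  refine ⟨hs0.le, D, hD, 1 - γ, by linarith, fun x hx r R hr hrR hRD => ?_⟩
  have hR : 0 < R := hr.trans_le hrR
  obtain ⟨k, hk1, hk2⟩ := exists_nat_pow_near_of_lt_one (div_pos hr hR)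
    ((div_le_one hR).2 hrR) hc0 hc1
  have hRr : (R / r) ^ s ≤ ((1 - γ) ^ (k + 1))⁻¹ := by
    rw [← hcs, Real.rpow_pow_comm hc0.le, ← Real.inv_rpow (by positivity)]
    refine Real.rpow_le_rpow (by positivity) ?_ hs0.le
    rw [← inv_div]
    exact (inv_le_inv₀ (by positivity) (by positivity)).2 hk1.le
  have hr_le : μ.real (ball x r) ≤ (1 - γ) ^ k * μ.real (ball x R) :=
    (measureReal_mono (ball_subset_ball ((div_le_iff₀ hR).1 hk2))).trans
      (measureReal_ball_pow_mul_le hc0 hc1 hγ1 h hx hR hRD k)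
  calc (1 - γ) * (R / r) ^ s * μ.real (ball x r)
      ≤ (1 - γ) * ((1 - γ) ^ (k + 1))⁻¹ * ((1 - γ) ^ k * μ.real (ball x R)) := by
        gcongr
    _ = μ.real (ball x R) := by
        have : (1 - γ) ^ (k + 1) ≠ 0 := pow_ne_zero _ (by linarith)
        field_simp
        ring

theorem exists_measureReal_ball_le_of_mem_lowerASet {s : ℝ} (hs : s ∈ lowerASet μ) :
    ∃ r₀ > 0, ∃ C, ∀ x ∈ msupp μ, ∀ r, 0 < r → r ≤ r₀ → μ.real (ball x r) ≤ C * r ^ s := by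
  obtain ⟨-, c₁, hc₁, c₂, hc₂, h⟩ := hs
  refine ⟨c₁, hc₁, μ.real univ / (c₂ * c₁ ^ s), fun x hx r hr hrc => ?_⟩
  have key := (h x hx r c₁ hr hrc le_rfl).trans (measureReal_mono (subset_univ _))
  rw [Real.div_rpow hc₁.le hr.le] at key
  have hrs : 0 < r ^ s := by positivity
  rw [div_mul_eq_mul_div, le_div_iff₀ (by positivity)]
  calc μ.real (ball x r) * (c₂ * c₁ ^ s)
      = c₂ * (c₁ ^ s / r ^ s) * μ.real (ball x r) * r ^ s := by field_simp
    _ ≤ μ.real univ * r ^ s := by gcongr; exact key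

theorem bddAbove_lowerASet_of_le_measure_ball {ρ q r₀ : ℝ} {z : X} (hρ0 : 0 < ρ) (hρ1 : ρ < 1)
    (hq : 0 < q) (hr₀ : 0 < r₀) (hz : z ∈ msupp μ) (x : ℕ → X) (hx : ∀ n, x n ∈ msupp μ)
    (h : ∀ n, ENNReal.ofReal (q ^ n) * μ (ball z r₀) ≤ μ (ball (x n) (ρ ^ n * r₀))) :
    BddAbove (lowerASet μ) := by
  refine ⟨Real.log q / Real.log ρ, fun s hs => ?_⟩
  obtain ⟨r₁, hr₁, C, hC⟩ := exists_measureReal_ball_le_of_mem_lowerASet hs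
  set m := μ.real (ball z r₀)
  have hm : 0 < m := ENNReal.toReal_pos (hz r₀ hr₀).ne' (measure_ne_top _ _)
  have hqs : q ≤ ρ ^ s := by
    by_contra! hlt
    have hsmall : ∀ᶠ n in atTop, ρ ^ n * r₀ ≤ r₁ := by
      have : Tendsto (fun n : ℕ => ρ ^ n * r₀) atTop (𝓝 0) := by
        simpa using (tendsto_pow_atTop_nhds_zero_of_lt_one hρ0.le hρ1).mul_const r₀
      exact this.eventually (ge_mem_nhds hr₁)
    have hlarge := (tendsto_pow_atTop_atTop_of_one_lt ((one_lt_div (by positivity)).2 hlt)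
      ).eventually_gt_atTop (C * r₀ ^ s / m)
    obtain ⟨n, hn, hqn⟩ := (hsmall.and hlarge).exists
    have hmass : q ^ n * m ≤ C * (ρ ^ n * r₀) ^ s := by
      have := ENNReal.toReal_mono (measure_ne_top _ _) (h n)
      rw [ENNReal.toReal_mul, ENNReal.toReal_ofReal (by positivity)] at this
      exact this.trans (hC _ (hx n) _ (by positivity) hn)
    rw [Real.mul_rpow (by positivity) hr₀.le, ← Real.rpow_pow_comm hρ0.le] at hmass
    rw [div_lt_iff₀ hm, div_pow, div_mul_eq_mul_div, lt_div_iff₀ (by positivity)] at hqn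
    nlinarith
  have hlog := Real.log_le_log hq hqs
  rw [Real.log_rpow hρ0] at hlog
  exact (le_div_iff_of_neg (Real.log_neg hρ0 hρ1)).2 hlog

end LowerAssouad

section Similarity

variable {X : Type*} [MetricSpace X] {f : X → X} {k : ℝ}

theorem preimage_ball_subset_ball (hf : ∀ x y, dist (f x) (f y) = k * dist x y) (hk : 0 < k)
    (x y : X) (r : ℝ) : f ⁻¹' ball x r ⊆ ball y ((r + dist (f y) x) / k) := by
  intro z hz
  rw [mem_preimage, mem_ball] at hz
  rw [mem_ball, lt_div_iff₀' hk, ← hf]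
  linarith [dist_triangle_right (f z) (f y) x]

theorem ball_subset_preimage_ball (hf : ∀ x y, dist (f x) (f y) = k * dist x y) (hk : 0 < k)
    (y : X) (r : ℝ) : ball y r ⊆ f ⁻¹' ball (f y) (k * r) := by
  intro z hz
  rw [mem_preimage, mem_ball, hf]
  exact mul_lt_mul_of_pos_left (mem_ball.1 hz) hk

end Similarity

section Words

variable {X ι : Type*}

@[simp]
def wordMap (S : ι → X → X) : List ι → X → X
  | [] => id
  | i :: w => S i ∘ wordMap S w

@[simp]
def wordProd (ρ : ι → ℝ) : List ι → ℝ
  | [] => 1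
  | i :: w => ρ i * wordProd ρ w

theorem wordProd_pos {ρ : ι → ℝ} (h : ∀ i, 0 < ρ i) : ∀ w, 0 < wordProd ρ w
  | [] => one_pos
  | i :: w => mul_pos (h i) (wordProd_pos h w)

theorem dist_wordMap [MetricSpace X] {S : ι → X → X} {ρ : ι → ℝ}
    (h : ∀ i x y, dist (S i x) (S i y) = ρ i * dist x y) :
    ∀ w x y, dist (wordMap S w x) (wordMap S w y) = wordProd ρ w * dist x y
  | [], x, y => by simp
  | i :: w, x, y => by simp [h, dist_wordMap h w, mul_assoc]

variable [Fintype ι] [DecidableEq ι] {ρ : ι → ℝ}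

/-- The words `w` with `wordProd ρ w ≤ t` whose proper prefixes all have ratio `> t`, truncated at
length `n`. -/
noncomputable def cutSet (ρ : ι → ℝ) : ℕ → ℝ → Finset (List ι)
  | 0, _ => {[]}
  | n + 1, t => if 1 ≤ t then {[]} else
      Finset.univ.biUnion fun i => (cutSet ρ n (t / ρ i)).image (i :: ·)

theorem cutSet_of_one_le {n : ℕ} {t : ℝ} (ht : 1 ≤ t) : cutSet ρ n t = {[]} := by
  cases n <;> simp [cutSet, ht]

theorem mem_cutSet_succ {n : ℕ} {t : ℝ} (ht : t < 1) {w : List ι} :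
    w ∈ cutSet ρ (n + 1) t ↔ ∃ i, ∃ v ∈ cutSet ρ n (t / ρ i), i :: v = w := by
  simp [cutSet, not_le.2 ht]

theorem wordProd_le_of_mem_cutSet {M : ℝ} (h0 : ∀ i, 0 < ρ i) (hM : ∀ i, ρ i ≤ M) {n : ℕ}
    {t : ℝ} {w : List ι} (hn : M ^ n ≤ t) (hw : w ∈ cutSet ρ n t) : wordProd ρ w ≤ t := by
  induction n generalizing t w with
  | zero =>
    rw [cutSet, Finset.mem_singleton] at hw
    simpa [hw] using hn
  | succ n ih =>
    rcases le_or_gt 1 t with ht | ht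
    · rw [cutSet_of_one_le ht, Finset.mem_singleton] at hw
      simpa [hw] using ht
    obtain ⟨i, v, hv, rfl⟩ := (mem_cutSet_succ ht).1 hw
    have hMn : M ^ n ≤ t / ρ i := by
      rw [le_div_iff₀ (h0 i)]
      calc M ^ n * ρ i ≤ M ^ n * M := by
            gcongr
            · exact pow_nonneg ((h0 i).le.trans (hM i)) n
            · exact hM i
        _ ≤ t := by rwa [← pow_succ]
    exact (le_div_iff₀' (h0 i)).1 (ih hMn hv)

theorem lt_wordProd_of_mem_cutSet {κ : ℝ} (hκ0 : 0 < κ) (hκ1 : κ < 1) (hκ : ∀ i, κ ≤ ρ i)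
    {n : ℕ} {t : ℝ} {w : List ι} (ht : t ≤ 1) (hw : w ∈ cutSet ρ n t) :
    κ * t < wordProd ρ w := by
  have hbase : ∀ {t : ℝ}, t ≤ 1 → κ * t < wordProd ρ [] := fun ht =>
    (mul_le_of_le_one_right hκ0.le ht).trans_lt hκ1
  induction n generalizing t w with
  | zero =>
    rw [cutSet, Finset.mem_singleton] at hw
    simpa [hw] using hbase ht
  | succ n ih =>
    rcases le_or_gt 1 t with ht1 | ht1
    · rw [cutSet_of_one_le ht1, Finset.mem_singleton] at hw
      simpa [hw] using hbase ht
    obtain ⟨i, v, hv, rfl⟩ := (mem_cutSet_succ ht1).1 hw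
    have hρi : 0 < ρ i := hκ0.trans_le (hκ i)
    rcases le_or_gt 1 (t / ρ i) with hti | hti
    · rw [cutSet_of_one_le hti, Finset.mem_singleton] at hv
      simp only [hv, wordProd, mul_one]
      exact (mul_lt_of_lt_one_right hκ0 ht1).trans_le (hκ i)
    calc κ * t = ρ i * (κ * (t / ρ i)) := by field_simp
      _ < ρ i * wordProd ρ v := by gcongr; exact ih hti.le hv

end Words

section SimilarCopies

variable {X : Type*} [MetricSpace X] [MeasurableSpace X] {μ : Measure X} {f : X → X} {k : ℝ}

theorem measure_ball_add_le_of_le_measure_preimage [OpensMeasurableSpace X]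
    (hf : ∀ x y, dist (f x) (f y) = k * dist x y) (hk : 0 < k) (hk4 : k ≤ 1 / 4) {q : ℝ≥0∞}
    (hq : ∀ A, MeasurableSet A → q * μ (f ⁻¹' A) ≤ μ A) {y : X} {a δ D : ℝ} (hD : 0 < D)
    (hnull : μ (closedBall y D)ᶜ = 0) (ha : a ≤ k * δ) (haD : a ≤ D / 2) :
    μ (ball (f y) a) + q * μ (ball y δ)ᶜ ≤ μ (ball (f y) (D / 2)) := by
  set G := ball (f y) (D / 2) \ ball (f y) a
  have hG : MeasurableSet G := measurableSet_ball.diff measurableSet_ball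
  have hpre : (ball y δ)ᶜ \ (closedBall y D)ᶜ ⊆ f ⁻¹' G := by
    rintro z ⟨hzδ, hzD⟩
    rw [notMem_compl_iff, mem_closedBall] at hzD
    refine ⟨?_, fun hz => hzδ ?_⟩
    · rw [mem_ball, hf]
      nlinarith [dist_nonneg (x := z) (y := y)]
    · refine ball_subset_ball ?_ (preimage_ball_subset_ball hf hk (f y) y a hz)
      rwa [dist_self, add_zero, div_le_iff₀' hk]
  calc μ (ball (f y) a) + q * μ (ball y δ)ᶜ
      = μ (ball (f y) a) + q * μ ((ball y δ)ᶜ \ (closedBall y D)ᶜ) := by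
        rw [measure_sdiff_null hnull]
    _ ≤ μ (ball (f y) a) + q * μ (f ⁻¹' G) := by gcongr
    _ ≤ μ (ball (f y) a) + μ G := by gcongr; exact hq G hG
    _ = μ (ball (f y) (D / 2)) := by
        rw [← measure_union disjoint_sdiff_right hG, union_sdiff_cancel (ball_subset_ball haD)]

theorem measure_preimage_ball_le_of_forall_measure_ball_le [HereditarilyLindelofSpace X]
    (hf : ∀ x y, dist (f x) (f y) = k * dist x y) (hk : 0 < k) {a D γ r R : ℝ}
    (hgap : ∀ y ∈ msupp μ, μ (ball y a) ≤ ENNReal.ofReal (1 - γ) * μ (ball y (D / 2)))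
    (hr : 2 * r ≤ k * a) (hR : k * (D / 2) + r ≤ R) (x : X) :
    μ (f ⁻¹' ball x r) ≤ ENNReal.ofReal (1 - γ) * μ (f ⁻¹' ball x R) := by
  rcases (f ⁻¹' ball x r ∩ msupp μ).eq_empty_or_nonempty with hempty | ⟨y, hyx, hy⟩
  · have hsub : f ⁻¹' ball x r ⊆ (msupp μ)ᶜ := fun z hz hzK => hempty.subset ⟨hz, hzK⟩
    rw [measure_mono_null hsub (measure_compl_msupp μ)]
    exact zero_le
  have hyx' : dist (f y) x < r := hyx
  calc μ (f ⁻¹' ball x r) ≤ μ (ball y a) := by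
        refine measure_mono ((preimage_ball_subset_ball hf hk x y r).trans (ball_subset_ball ?_))
        rw [div_le_iff₀' hk]
        linarith
    _ ≤ ENNReal.ofReal (1 - γ) * μ (ball y (D / 2)) := hgap y hy
    _ ≤ ENNReal.ofReal (1 - γ) * μ (f ⁻¹' ball x R) := by
        refine mul_le_mul_right (measure_mono ((ball_subset_preimage_ball hf hk y _).trans
          (preimage_mono (ball_subset_ball' ?_)))) _
        linarith

end SimilarCopies

section SelfSimilar

variable {X ι : Type*} [MetricSpace X] [MeasurableSpace X] [Fintype ι]

structure IsSelfSimilar (μ : Measure X) (S : ι → X → X) (ρ p : ι → ℝ) : Prop where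
  dist_eq : ∀ i x y, dist (S i x) (S i y) = ρ i * dist x y
  ratio_pos : ∀ i, 0 < ρ i
  ratio_lt_one : ∀ i, ρ i < 1
  weight_pos : ∀ i, 0 < p i
  eq_sum_map : μ = ∑ i, ENNReal.ofReal (p i) • μ.map (S i)

variable {μ : Measure X} {S : ι → X → X} {ρ p : ι → ℝ}

namespace IsSelfSimilar

theorem continuous (h : IsSelfSimilar μ S ρ p) (i : ι) : Continuous (S i) :=
  (LipschitzWith.of_dist_le' fun x y => (h.dist_eq i x y).le).continuous

theorem nonempty [IsProbabilityMeasure μ] (h : IsSelfSimilar μ S ρ p) : Nonempty ι := by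
  by_contra hι
  have h0 := h.eq_sum_map
  simp [not_nonempty_iff.1 hι] at h0
  exact IsProbabilityMeasure.ne_zero μ h0

variable [BorelSpace X]

theorem measure_eq_sum (h : IsSelfSimilar μ S ρ p) {A : Set X} (hA : MeasurableSet A) :
    μ A = ∑ i, ENNReal.ofReal (p i) * μ (S i ⁻¹' A) := by
  conv_lhs => rw [h.eq_sum_map]
  simp [Measure.map_apply (h.continuous _).measurable hA]

theorem ofReal_mul_measure_preimage_le (h : IsSelfSimilar μ S ρ p) (i : ι) {A : Set X}
    (hA : MeasurableSet A) : ENNReal.ofReal (p i) * μ (S i ⁻¹' A) ≤ μ A := by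
  rw [h.measure_eq_sum hA]
  exact Finset.single_le_sum (f := fun j => ENNReal.ofReal (p j) * μ (S j ⁻¹' A))
    (fun _ _ => zero_le) (Finset.mem_univ i)

theorem ofReal_mul_measure_ball_le (h : IsSelfSimilar μ S ρ p) (i : ι) (z : X) (r : ℝ) :
    ENNReal.ofReal (p i) * μ (ball z r) ≤ μ (ball (S i z) (ρ i * r)) :=
  (mul_le_mul_right (measure_mono (ball_subset_preimage_ball (h.dist_eq i) (h.ratio_pos i) z r))
    _).trans (h.ofReal_mul_measure_preimage_le i measurableSet_ball)

theorem ofReal_pow_mul_measure_ball_le (h : IsSelfSimilar μ S ρ p) (i : ι) (z : X) (r : ℝ)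
    (n : ℕ) : ENNReal.ofReal (p i ^ n) * μ (ball z r) ≤ μ (ball ((S i)^[n] z) (ρ i ^ n * r)) := by
  induction n with
  | zero => simp
  | succ n ih =>
    rw [Function.iterate_succ_apply', pow_succ', ENNReal.ofReal_mul (h.weight_pos i).le,
      pow_succ', mul_assoc, mul_assoc]
    exact (mul_le_mul_right ih _).trans (h.ofReal_mul_measure_ball_le i _ _)

theorem mapsTo_msupp (h : IsSelfSimilar μ S ρ p) (i : ι) : MapsTo (S i) (msupp μ) (msupp μ) := by
  intro z hz r hr
  have hρ := h.ratio_pos i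
  have hmass := h.ofReal_mul_measure_ball_le i z (r / ρ i)
  rw [mul_div_cancel₀ _ hρ.ne'] at hmass
  exact (ENNReal.mul_pos (ENNReal.ofReal_pos.2 (h.weight_pos i)).ne'
    (hz _ (by positivity)).ne').trans_le hmass

theorem sum_ofReal_weight [IsProbabilityMeasure μ] (h : IsSelfSimilar μ S ρ p) :
    ∑ i, ENNReal.ofReal (p i) = 1 := by
  simpa using (h.measure_eq_sum MeasurableSet.univ).symm

theorem measure_le_of_subset_preimage [IsProbabilityMeasure μ] (h : IsSelfSimilar μ S ρ p)
    {A B : Set X} (hB : MeasurableSet B) (hAB : ∀ i, A ⊆ S i ⁻¹' B) : μ A ≤ μ B :=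
  calc μ A = ∑ i, ENNReal.ofReal (p i) * μ A := by
        rw [← Finset.sum_mul, h.sum_ofReal_weight, one_mul]
    _ ≤ ∑ i, ENNReal.ofReal (p i) * μ (S i ⁻¹' B) := by gcongr with i; exact hAB i
    _ = μ B := (h.measure_eq_sum hB).symm

theorem measure_eq_sum_cutSet [DecidableEq ι] (h : IsSelfSimilar μ S ρ p) {A : Set X}
    (hA : MeasurableSet A) (n : ℕ) (t : ℝ) :
    μ A = ∑ w ∈ cutSet ρ n t, ENNReal.ofReal (wordProd p w) * μ (wordMap S w ⁻¹' A) := by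
  induction n generalizing t A with
  | zero => simp [cutSet]
  | succ n ih =>
    rcases le_or_gt 1 t with ht | ht
    · simp [cutSet_of_one_le ht]
    have hdisj : ((Finset.univ : Finset ι) : Set ι).PairwiseDisjoint
        fun i => (cutSet ρ n (t / ρ i)).image (i :: ·) := by
      intro i _ j _ hij
      simp only [Function.onFun, Finset.disjoint_left, Finset.mem_image]
      rintro _ ⟨v, -, rfl⟩ ⟨v', -, hv⟩
      exact hij (List.cons.inj hv).1.symm
    rw [cutSet, if_neg (not_le.2 ht), Finset.sum_biUnion hdisj, h.measure_eq_sum hA]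
    refine Finset.sum_congr rfl fun i _ => ?_
    rw [Finset.sum_image fun _ _ _ _ hvw => List.cons_injective hvw,
      ih ((h.continuous i).measurable hA), Finset.mul_sum]
    refine Finset.sum_congr rfl fun v _ => ?_
    simp [ENNReal.ofReal_mul (h.weight_pos i).le, preimage_comp, mul_assoc]

theorem exists_cutSet [Nonempty ι] (h : IsSelfSimilar μ S ρ p) :
    ∃ κ > 0, ∀ t, 0 < t → t ≤ 1 → ∃ Λ : Finset (List ι),
      (∀ w ∈ Λ, κ * t < wordProd ρ w ∧ wordProd ρ w ≤ t) ∧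
      ∀ A, MeasurableSet A →
        μ A = ∑ w ∈ Λ, ENNReal.ofReal (wordProd p w) * μ (wordMap S w ⁻¹' A) := by
  classical
  obtain ⟨i, hi⟩ := Finite.exists_min ρ
  obtain ⟨j, hj⟩ := Finite.exists_max ρ
  refine ⟨ρ i, h.ratio_pos i, fun t ht0 ht1 => ?_⟩
  obtain ⟨n, hn⟩ := exists_pow_lt_of_lt_one ht0 (h.ratio_lt_one j)
  exact ⟨cutSet ρ n t, fun w hw =>
    ⟨lt_wordProd_of_mem_cutSet (h.ratio_pos i) (h.ratio_lt_one i) hi ht1 hw,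
      wordProd_le_of_mem_cutSet h.ratio_pos hj hn.le hw⟩,
    fun A hA => h.measure_eq_sum_cutSet hA n t⟩

theorem measure_closedBall_le_mul_add [IsProbabilityMeasure μ] (h : IsSelfSimilar μ S ρ p)
    {b : X} {M L r : ℝ} (hM : ∀ i, ρ i ≤ M) (hL : ∀ i, dist (S i b) b ≤ L) :
    μ (closedBall b r) ≤ μ (closedBall b (M * r + L)) := by
  refine h.measure_le_of_subset_preimage measurableSet_closedBall fun i z hz => ?_
  rw [mem_closedBall] at hz
  rw [mem_preimage, mem_closedBall]
  calc dist (S i z) b ≤ dist (S i z) (S i b) + dist (S i b) b := dist_triangle _ _ _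
    _ ≤ M * r + L := by
      rw [h.dist_eq]
      gcongr
      exacts [(h.ratio_pos i).le.trans (hM i), hM i, hL i]

theorem exists_measure_closedBall_le [IsProbabilityMeasure μ] (h : IsSelfSimilar μ S ρ p)
    (b : X) : ∃ R, ∀ r, μ (closedBall b r) ≤ μ (closedBall b R) := by
  have := h.nonempty
  obtain ⟨j, hj⟩ := Finite.exists_max ρ
  set M := ρ j
  have hM0 : 0 < M := h.ratio_pos j
  have hM1 : M < 1 := h.ratio_lt_one j
  set L := ∑ i, dist (S i b) b
  have hL : ∀ i, dist (S i b) b ≤ L := fun i =>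
    Finset.single_le_sum (f := fun i => dist (S i b) b) (fun _ _ => dist_nonneg) (Finset.mem_univ i)
  -- `R₀` is the fixed point of `r ↦ M * r + L`, so every `S i` maps `closedBall b (R₀ + s)`
  -- into `closedBall b (R₀ + M * s)`.
  set R₀ := L / (1 - M)
  have hR₀ : M * R₀ + L = R₀ := by
    simp only [R₀]
    field_simp [(sub_pos.2 hM1).ne']
    ring
  have hiter : ∀ n : ℕ, ∀ r ≤ R₀ + M⁻¹ ^ n, μ (closedBall b r) ≤ μ (closedBall b (R₀ + 1)) := by
    intro n
    induction n with
    | zero => exact fun r hr => measure_mono (closedBall_subset_closedBall (by simpa using hr))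
    | succ n ih =>
      refine fun r hr => (h.measure_closedBall_le_mul_add hj hL).trans (ih _ ?_)
      calc M * r + L ≤ M * (R₀ + M⁻¹ ^ (n + 1)) + L := by gcongr
        _ = R₀ + M⁻¹ ^ n := by
          have hMn : M * M⁻¹ ^ (n + 1) = M⁻¹ ^ n := by
            rw [pow_succ', ← mul_assoc, mul_inv_cancel₀ hM0.ne', one_mul]
          linear_combination hR₀ + hMn
  refine ⟨R₀ + 1, fun r => ?_⟩
  obtain ⟨n, hn⟩ := pow_unbounded_of_one_lt (r - R₀) ((one_lt_inv₀ hM0).2 hM1)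
  exact hiter n r (by linarith)

theorem isBounded_msupp [IsProbabilityMeasure μ] (h : IsSelfSimilar μ S ρ p) :
    Bornology.IsBounded (msupp μ) := by
  obtain ⟨b⟩ := nonempty_of_isProbabilityMeasure μ
  obtain ⟨R, hR⟩ := h.exists_measure_closedBall_le b
  refine (isBounded_closedBall (x := b) (r := R + 1)).subset fun x hx => ?_
  by_contra hfar
  rw [mem_closedBall, not_le] at hfar
  have hsub : ball x 1 ⊆ closedBall b (dist x b + 1) \ closedBall b R := by
    intro z hz
    rw [mem_ball] at hz
    refine ⟨mem_closedBall.2 (by linarith [dist_triangle z x b]), fun hzR => ?_⟩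
    rw [mem_closedBall] at hzR
    linarith [dist_triangle_left x b z]
  have hnull : μ (closedBall b (dist x b + 1) \ closedBall b R) = 0 := by
    rw [measure_sdiff (closedBall_subset_closedBall (by linarith))
      measurableSet_closedBall.nullMeasurableSet (measure_ne_top _ _)]
    exact tsub_eq_zero_of_le (hR _)
  exact (hx 1 one_pos).ne' (measure_mono_null hsub hnull)

theorem isCompact_msupp [ProperSpace X] [IsProbabilityMeasure μ] (h : IsSelfSimilar μ S ρ p) :
    IsCompact (msupp μ) :=
  isCompact_of_isClosed_isBounded (msupp_eq_support μ ▸ Measure.isClosed_support)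
    h.isBounded_msupp

theorem bddAbove_lowerASet [HereditarilyLindelofSpace X] [IsProbabilityMeasure μ]
    (h : IsSelfSimilar μ S ρ p) : BddAbove (lowerASet μ) := by
  have := h.nonempty
  obtain ⟨z, hz⟩ := Measure.nonempty_support (IsProbabilityMeasure.ne_zero μ)
  rw [← msupp_eq_support] at hz
  let i := Classical.arbitrary ι
  exact bddAbove_lowerASet_of_le_measure_ball (h.ratio_pos i) (h.ratio_lt_one i) (h.weight_pos i)
    one_pos hz (fun n => (S i)^[n] z) (fun n => (h.mapsTo_msupp i).iterate n hz)
    (h.ofReal_pow_mul_measure_ball_le i z 1)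

theorem exists_measure_ball_add_le [ProperSpace X] [IsProbabilityMeasure μ]
    (h : IsSelfSimilar μ S ρ p) (hK : (msupp μ).Nontrivial) :
    ∃ a > 0, ∃ g > 0, ∀ y ∈ msupp μ,
      μ (ball y a) + ENNReal.ofReal g ≤ μ (ball y (diam (msupp μ) / 2)) := by
  have := h.nonempty
  set D := diam (msupp μ)
  have hD : 0 < D := diam_pos hK h.isBounded_msupp
  obtain ⟨a₀, ha₀, b₀, hb₀, hne⟩ := hK
  have hab := dist_pos.2 hne
  have habD := dist_le_diam_of_mem h.isBounded_msupp ha₀ hb₀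
  set δ := dist a₀ b₀ / 8
  have hδ : 0 < δ := by positivity
  have hδD : δ ≤ D / 8 := by simp only [δ]; linarith
  obtain ⟨η, hη, hηball⟩ :=
    exists_ofReal_le_measure_compl_ball ha₀ hb₀ hδ (by simp only [δ]; linarith)
  obtain ⟨κ, hκ, hcut⟩ := h.exists_cutSet
  obtain ⟨Λ, hΛρ, hΛμ⟩ := hcut (1 / 4) (by norm_num) (by norm_num)
  obtain ⟨P, hP, hPΛ⟩ := Λ.exists_pos_forall_le (wordProd_pos h.weight_pos)
  have hcover := msupp_subset_biUnion_image h.isCompact_msupp (fun w _ =>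
    (LipschitzWith.of_dist_le' fun x y => (dist_wordMap h.dist_eq w x y).le).continuous) hΛμ
  refine ⟨κ * δ / 4, by positivity, P * η, by positivity, fun y hy => ?_⟩
  -- `y` lies in a copy `S_w K` of `K` scaled by at most `1 / 4`, and `μ` dominates
  -- `p_w • μ ∘ S_w⁻¹`, which gives mass `≥ P * η` to that copy minus `ball y (κ * δ / 4)`.
  obtain ⟨w, hw, y₀, hy₀, rfl⟩ : ∃ w ∈ Λ, ∃ y₀ ∈ msupp μ, wordMap S w y₀ = y := by
    simpa using hcover hy
  obtain ⟨hκw, hw4⟩ := hΛρ w hw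
  refine le_trans ?_ (measure_ball_add_le_of_le_measure_preimage (dist_wordMap h.dist_eq w)
    (wordProd_pos h.ratio_pos w) hw4 (q := ENNReal.ofReal (wordProd p w)) (fun A hA => ?_) hD
    (measure_compl_closedBall_diam_msupp h.isBounded_msupp hy₀) (a := κ * δ / 4) (δ := δ)
    ?_ ?_)
  · rw [ENNReal.ofReal_mul hP.le]
    gcongr
    exacts [hPΛ w hw, hηball y₀]
  · rw [hΛμ A hA]
    exact Finset.single_le_sum
      (f := fun v => ENNReal.ofReal (wordProd p v) * μ (wordMap S v ⁻¹' A))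
      (fun _ _ => zero_le) hw
  · nlinarith
  · have hκ1 : κ < 1 := by linarith
    nlinarith

theorem exists_measure_ball_le_mul_measure_ball_half_diam [ProperSpace X]
    [IsProbabilityMeasure μ] (h : IsSelfSimilar μ S ρ p) (hK : (msupp μ).Nontrivial) :
    ∃ a > 0, ∃ γ, 0 < γ ∧ γ < 1 ∧ ∀ y ∈ msupp μ,
      μ (ball y a) ≤ ENNReal.ofReal (1 - γ) * μ (ball y (diam (msupp μ) / 2)) := by
  obtain ⟨a, ha, γ, hγ, hgap⟩ := h.exists_measure_ball_add_le hK
  refine ⟨a, ha, γ, hγ, ?_, fun y hy =>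
    ENNReal.le_ofReal_one_sub_mul hγ.le prob_le_one (hgap y hy)⟩
  obtain ⟨y, hy⟩ := hK.nonempty
  have hlt : ENNReal.ofReal γ < μ (ball y a) + ENNReal.ofReal γ := by
    rw [add_comm]
    exact ENNReal.lt_add_right ENNReal.ofReal_ne_top (hy a ha).ne'
  exact ENNReal.ofReal_lt_one.1 (hlt.trans_le ((hgap y hy).trans prob_le_one))

theorem exists_measure_ball_le_mul_measure_ball [ProperSpace X] [IsProbabilityMeasure μ]
    (h : IsSelfSimilar μ S ρ p) (hK : (msupp μ).Nontrivial) :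
    ∃ c γ, 0 < c ∧ c < 1 ∧ 0 < γ ∧ γ < 1 ∧ ∀ x ∈ msupp μ, ∀ R, 0 < R → R ≤ diam (msupp μ) →
      μ (ball x (c * R)) ≤ ENNReal.ofReal (1 - γ) * μ (ball x R) := by
  have := h.nonempty
  set D := diam (msupp μ)
  have hD : 0 < D := diam_pos hK h.isBounded_msupp
  obtain ⟨a, ha, γ, hγ0, hγ1, hgap⟩ := h.exists_measure_ball_le_mul_measure_ball_half_diam hK
  obtain ⟨κ, hκ, hcut⟩ := h.exists_cutSet
  set c := min (κ * a / (2 * D)) (1 / 2)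
  have hc0 : 0 < c := by positivity
  have hcκ : c * (2 * D) ≤ κ * a := (le_div_iff₀ (by positivity)).1 (min_le_left _ _)
  have hc2 : c ≤ 1 / 2 := min_le_right _ _
  refine ⟨c, γ, hc0, by linarith, hγ0, hγ1, fun x hx R hR hRD => ?_⟩
  obtain ⟨Λ, hΛρ, hΛμ⟩ := hcut (R / D) (by positivity) ((div_le_one hD).2 hRD)
  rw [hΛμ _ measurableSet_ball, hΛμ _ measurableSet_ball, Finset.mul_sum]
  refine Finset.sum_le_sum fun w hw => ?_
  obtain ⟨hκw, hwt⟩ := hΛρ w hw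
  rw [mul_left_comm]
  refine mul_le_mul_right (measure_preimage_ball_le_of_forall_measure_ball_le
    (dist_wordMap h.dist_eq w) (wordProd_pos h.ratio_pos w) hgap ?_ ?_ x) _
  · calc 2 * (c * R) = c * (2 * D) * (R / D) := by field_simp
      _ ≤ κ * (R / D) * a := by nlinarith [div_pos hR hD]
      _ ≤ wordProd ρ w * a := by gcongr
  · have := (le_div_iff₀ hD).1 hwt
    nlinarith

end IsSelfSimilar

end SelfSimilar

theorem self_similar_measure_positive_lower_dim_general
    (d N : ℕ)
    (S : Fin N → EuclideanSpace ℝ (Fin d) → EuclideanSpace ℝ (Fin d))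
    (hsim : ∀ i, ∃ r : ℝ, 0 < r ∧ r < 1 ∧ ∀ x y, dist (S i x) (S i y) = r * dist x y)
    (p : Fin N → ℝ) (hp : ∀ i, 0 < p i)
    (μ : Measure (EuclideanSpace ℝ (Fin d))) [IsProbabilityMeasure μ]
    (hself : μ = ∑ i, ENNReal.ofReal (p i) • μ.map (S i))
    (hnondeg : ¬ ∃ x, msupp μ = {x}) :
    0 < dimL μ ∧
    ∃ c γ : ℝ, 0 < c ∧ c < 1 ∧ 0 < γ ∧
      ∀ x ∈ msupp μ, ∀ R : ℝ, 0 < R → R ≤ diam (msupp μ) →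
        ENNReal.ofReal γ * μ (ball x R) ≤ μ (ball x R \ ball x (c * R)) := by
  choose ρ hρ0 hρ1 hρd using hsim
  have h : IsSelfSimilar μ S ρ p := ⟨hρd, hρ0, hρ1, hp, hself⟩
  have hK : (msupp μ).Nontrivial := by
    rw [msupp_eq_support] at hnondeg ⊢
    exact ((Measure.nonempty_support (IsProbabilityMeasure.ne_zero μ)
      ).exists_eq_singleton_or_nontrivial).resolve_left hnondeg
  obtain ⟨c, γ, hc0, hc1, hγ0, hγ1, hdecay⟩ := h.exists_measure_ball_le_mul_measure_ball hK
  refine ⟨?_, c, γ, hc0, hc1, hγ0, fun x hx R hR hRD => ?_⟩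
  · exact lt_csSup_of_lt h.bddAbove_lowerASet
      (mem_lowerASet_of_measure_ball_le hc0 hc1 hγ0 hγ1 (diam_pos hK h.isBounded_msupp) hdecay)
      (div_pos_of_neg_of_neg (Real.log_neg (by linarith) (by linarith)) (Real.log_neg hc0 hc1))
  · exact ofReal_mul_le_measure_diff (ball_subset_ball (mul_le_of_le_one_left hR.le hc1.le))
      measurableSet_ball hγ0.le hγ1.le (hdecay x hx R hR hRD)

theorem self_similar_measure_positive_lower_dim
    (d N : ℕ) (hN : 2 ≤ N)
    (S : Fin N → EuclideanSpace ℝ (Fin d) → EuclideanSpace ℝ (Fin d))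
    (hsim : ∀ i, ∃ r : ℝ, 0 < r ∧ r < 1 ∧ ∀ x y, dist (S i x) (S i y) = r * dist x y)
    (p : Fin N → ℝ) (hp : ∀ i, 0 < p i) (hsum : ∑ i, p i = 1)
    (μ : Measure (EuclideanSpace ℝ (Fin d))) [IsProbabilityMeasure μ]
    (hself : μ = ∑ i, ENNReal.ofReal (p i) • μ.map (S i))
    (hnondeg : ¬ ∃ x, msupp μ = {x}) :
    0 < dimL μ ∧
    ∃ c γ : ℝ, 0 < c ∧ c < 1 ∧ 0 < γ ∧
      ∀ x ∈ msupp μ, ∀ R : ℝ, 0 < R → R ≤ diam (msupp μ) →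
        ENNReal.ofReal γ * μ (ball x R) ≤ μ (ball x R \ ball x (c * R)) :=
  self_similar_measure_positive_lower_dim_general d N S hsim p hp μ hself hnondeg
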